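/- Fix b ∈ ℝ and ω > 0. Let y ∈ ℝ² with y ≠ 0, η ∈ ℝ², and t ≥ 0, and assume x^s(y,η) ≠ 0 for all s ∈ [0,t]. Then the action S(t,y,η) := (1/2)∫₀ᵗ (|ξ^s|² − |A(x^s)|² − ω²|x^s|²) ds satisfies S(t,y,η) = ((cos(2ωt) − 1)/2)·(y·η) + (sin(2ωt)/(4ω))·(|η − A(y)|² − ω²|y|²) + b·(y ∧ η − b)·∫₀ᵗ |x^s|⁻² ds, where u ∧ v := u₁v₂ − u₂v₁. -/

import Mathlib

/-- The Aharonov–Bohm vector potential with flux `b`: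
`A(x) = (−b x₂/|x|², b x₁/|x|²)` for `x ∈ ℝ² \ {0}`. -/
noncomputable def A (b : ℝ) (x : ℝ × ℝ) : ℝ × ℝ :=
  (-b * x.2 / (x.1 ^ 2 + x.2 ^ 2), b * x.1 / (x.1 ^ 2 + x.2 ^ 2))

/-- The wedge product `u ∧ v = u₁v₂ − u₂v₁` on `ℝ²`. -/
def wedge (u v : ℝ × ℝ) : ℝ := u.1 * v.2 - u.2 * v.1

/-- The Euclidean inner product on `ℝ²`. -/
def dot (u v : ℝ × ℝ) : ℝ := u.1 * v.1 + u.2 * v.2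

/-- The squared Euclidean norm on `ℝ²`. -/
def normSq2 (u : ℝ × ℝ) : ℝ := u.1 ^ 2 + u.2 ^ 2

/-- The classical trajectory `x^t(y,η) = cos(ωt)·y + (sin(ωt)/ω)·(η − A(y))`. -/
noncomputable def traj (b ω : ℝ) (y η : ℝ × ℝ) (t : ℝ) : ℝ × ℝ :=
  Real.cos (ω * t) • y + (Real.sin (ω * t) / ω) • (η - A b y)

/-- The momentum `ξ^s(y,η) = (d/ds)x^s + A(x^s)`, defined when `x^s ≠ 0`. -/
noncomputable def xi (b ω : ℝ) (y η : ℝ × ℝ) (s : ℝ) : ℝ × ℝ :=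
  deriv (traj b ω y η) s + A b (traj b ω y η s)

/-- The action `S(t,y,η) = (1/2)∫₀ᵗ (|ξ^s|² − |A(x^s)|² − ω²|x^s|²) ds`. -/
noncomputable def action (b ω : ℝ) (y η : ℝ × ℝ) (t : ℝ) : ℝ :=
  (1 / 2) * ∫ s in (0 : ℝ)..t,
    (normSq2 (xi b ω y η s) - normSq2 (A b (traj b ω y η s))
      - ω ^ 2 * normSq2 (traj b ω y η s))

/-!
Write `v = η − A(y)`, so that `x^s = cos(ωs) y + (sin(ωs)/ω) v` solves `ẍ = −ω² x`.
Since `ξ = ẋ + A(x)` and `A(x)·ẋ = b (x ∧ ẋ)/|x|²`, the Lagrangian splits as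
`(|ẋ|² − ω²|x|²) + 2b (x ∧ ẋ)/|x|²`. The first part is the derivative of `x·ẋ`, so it
integrates to `x^t·ẋ^t − y·v`, which the double-angle formulas turn into the trigonometric
terms. In the second part the angular momentum `x ∧ ẋ` is conserved, equal to
`y ∧ v = y ∧ η − b`; and `y·v = y·η` because `A(y) ⊥ y`.
-/

open Real

lemma normSq2_add (u v : ℝ × ℝ) : normSq2 (u + v) = normSq2 u + 2 * dot u v + normSq2 v := by
  simp only [normSq2, dot, Prod.fst_add, Prod.snd_add]; ring

@[fun_prop]
lemma continuous_normSq2 : Continuous normSq2 := by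
  unfold normSq2; fun_prop

lemma normSq2_ne_zero {u : ℝ × ℝ} (hu : u ≠ 0) : normSq2 u ≠ 0 := by
  contrapose! hu
  obtain ⟨h1, h2⟩ := (add_eq_zero_iff_of_nonneg (sq_nonneg u.1) (sq_nonneg u.2)).1 hu
  exact Prod.ext (pow_eq_zero_iff two_ne_zero |>.1 h1) (pow_eq_zero_iff two_ne_zero |>.1 h2)

theorem HasDerivAt.dot {f g : ℝ → ℝ × ℝ} {f' g' : ℝ × ℝ} {s : ℝ}
    (hf : HasDerivAt f f' s) (hg : HasDerivAt g g' s) :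
    HasDerivAt (fun u => dot (f u) (g u)) (dot f' (g s) + dot (f s) g') s := by
  have h₁ := (hasFDerivAt_fst.comp_hasDerivAt s hf).mul (hasFDerivAt_fst.comp_hasDerivAt s hg)
  have h₂ := (hasFDerivAt_snd.comp_hasDerivAt s hf).mul (hasFDerivAt_snd.comp_hasDerivAt s hg)
  refine (h₁.add h₂).congr_deriv ?_
  simp only [_root_.dot, ContinuousLinearMap.coe_fst', ContinuousLinearMap.coe_snd',
    Function.comp_apply]
  ring

-- Also at `x = 0`, where both sides vanish because `_ / 0 = 0`.
lemma dot_A (b : ℝ) (x u : ℝ × ℝ) : dot u (A b x) = b * wedge x u / normSq2 x := by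
  simp only [dot, wedge, A, normSq2]; ring

lemma dot_sub_A (b : ℝ) (y η : ℝ × ℝ) : dot y (η - A b y) = dot y η := by
  simp only [dot, A, Prod.fst_sub, Prod.snd_sub]; ring

lemma wedge_sub_A (b : ℝ) {y : ℝ × ℝ} (hy : y ≠ 0) (η : ℝ × ℝ) :
    wedge y (η - A b y) = wedge y η - b := by
  have hy' := normSq2_ne_zero hy
  simp only [wedge, A, normSq2, Prod.fst_sub, Prod.snd_sub] at hy' ⊢
  field_simp
  ring

noncomputable def trajVel (b ω : ℝ) (y η : ℝ × ℝ) (s : ℝ) : ℝ × ℝ :=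
  (-ω * sin (ω * s)) • y + cos (ω * s) • (η - A b y)

section Trajectory

variable {b ω : ℝ} (y η : ℝ × ℝ)

lemma traj_zero : traj b ω y η 0 = y := by
  simp [traj]

lemma trajVel_zero : trajVel b ω y η 0 = η - A b y := by
  simp [trajVel]

@[fun_prop]
lemma continuous_traj : Continuous (traj b ω y η) := by
  unfold traj; fun_prop

@[fun_prop]
lemma continuous_trajVel : Continuous (trajVel b ω y η) := by
  unfold trajVel; fun_prop

variable (hω : ω ≠ 0)
include hω

lemma hasDerivAt_traj (s : ℝ) : HasDerivAt (traj b ω y η) (trajVel b ω y η s) s := by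
  refine (((hasDerivAt_const_mul ω).cos.smul_const y).add
    (((hasDerivAt_const_mul ω).sin.div_const ω).smul_const (η - A b y))).congr_deriv ?_
  rw [trajVel, mul_div_cancel_right₀ _ hω, neg_mul_comm, mul_comm]

lemma deriv_traj : deriv (traj b ω y η) = trajVel b ω y η :=
  funext fun s => (hasDerivAt_traj y η hω s).deriv

lemma hasDerivAt_trajVel (s : ℝ) :
    HasDerivAt (trajVel b ω y η) (-ω ^ 2 • traj b ω y η s) s := by
  refine ((((hasDerivAt_const_mul ω).sin.const_mul (-ω)).smul_const y).add
    ((hasDerivAt_const_mul ω).cos.smul_const (η - A b y))).congr_deriv ?_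
  simp only [traj, smul_add, smul_smul]
  congr 2 <;> field_simp

lemma wedge_traj_trajVel (s : ℝ) :
    wedge (traj b ω y η s) (trajVel b ω y η s) = wedge y (η - A b y) := by
  simp only [traj, trajVel, wedge, Prod.fst_add, Prod.snd_add, Prod.smul_fst, Prod.smul_snd,
    smul_eq_mul]
  field_simp
  linear_combination (y.1 * (η - A b y).2 - y.2 * (η - A b y).1) * ω * sin_sq_add_cos_sq (ω * s)

lemma dot_traj_trajVel (s : ℝ) :
    dot (traj b ω y η s) (trajVel b ω y η s) =
      cos (2 * ω * s) * dot y (η - A b y) +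
        sin (2 * ω * s) / (2 * ω) * (normSq2 (η - A b y) - ω ^ 2 * normSq2 y) := by
  rw [mul_assoc, cos_two_mul', sin_two_mul]
  simp only [traj, trajVel, dot, normSq2, Prod.fst_add, Prod.snd_add, Prod.smul_fst,
    Prod.smul_snd, smul_eq_mul]
  field_simp
  ring

lemma hasDerivAt_dot_traj_trajVel (s : ℝ) :
    HasDerivAt (fun u => dot (traj b ω y η u) (trajVel b ω y η u))
      (normSq2 (trajVel b ω y η s) - ω ^ 2 * normSq2 (traj b ω y η s)) s := by
  refine ((hasDerivAt_traj y η hω s).dot (hasDerivAt_trajVel y η hω s)).congr_deriv ?_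
  simp only [dot, normSq2, Prod.smul_fst, Prod.smul_snd, smul_eq_mul]
  ring

lemma integral_harmonic_lagrangian (t : ℝ) :
    ∫ s in (0 : ℝ)..t, (normSq2 (trajVel b ω y η s) - ω ^ 2 * normSq2 (traj b ω y η s)) =
      dot (traj b ω y η t) (trajVel b ω y η t) - dot y (η - A b y) := by
  rw [intervalIntegral.integral_eq_sub_of_hasDerivAt
    (fun s _ => hasDerivAt_dot_traj_trajVel y η hω s)
    ((by fun_prop : Continuous _).intervalIntegrable 0 t), traj_zero, trajVel_zero]

lemma lagrangian_eq (s : ℝ) :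
    normSq2 (xi b ω y η s) - normSq2 (A b (traj b ω y η s)) - ω ^ 2 * normSq2 (traj b ω y η s) =
      (normSq2 (trajVel b ω y η s) - ω ^ 2 * normSq2 (traj b ω y η s)) +
        2 * b * wedge y (η - A b y) * (normSq2 (traj b ω y η s))⁻¹ := by
  rw [xi, deriv_traj y η hω, normSq2_add, dot_A, wedge_traj_trajVel y η hω]
  ring

end Trajectory

theorem action_formula_general (b ω : ℝ) (hω : 0 < ω)
    (y : ℝ × ℝ) (η : ℝ × ℝ) (t : ℝ) (ht : 0 ≤ t)
    (hne : ∀ s ∈ Set.Icc (0 : ℝ) t, traj b ω y η s ≠ 0) :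
    action b ω y η t =
      ((Real.cos (2 * ω * t) - 1) / 2) * dot y η +
      (Real.sin (2 * ω * t) / (4 * ω)) *
        (normSq2 (η - A b y) - ω ^ 2 * normSq2 y) +
      b * (wedge y η - b) *
        ∫ s in (0 : ℝ)..t, (normSq2 (traj b ω y η s))⁻¹ := by
  have hω₀ : ω ≠ 0 := hω.ne'
  have hy : y ≠ 0 := traj_zero (b := b) (ω := ω) y η ▸ hne 0 ⟨le_rfl, ht⟩
  have hharm : IntervalIntegrable
      (fun s => normSq2 (trajVel b ω y η s) - ω ^ 2 * normSq2 (traj b ω y η s))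
      MeasureTheory.volume 0 t :=
    (by fun_prop : Continuous _).intervalIntegrable 0 t
  have hinv : IntervalIntegrable (fun s => (normSq2 (traj b ω y η s))⁻¹)
      MeasureTheory.volume 0 t := by
    refine ContinuousOn.intervalIntegrable ?_
    rw [Set.uIcc_of_le ht]
    exact (continuous_normSq2.comp (continuous_traj y η)).continuousOn.inv₀
      fun s hs => normSq2_ne_zero (hne s hs)
  simp only [action, lagrangian_eq y η hω₀]
  rw [intervalIntegral.integral_add hharm (hinv.const_mul _),
    integral_harmonic_lagrangian y η hω₀, intervalIntegral.integral_const_mul,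
    dot_traj_trajVel y η hω₀, dot_sub_A, wedge_sub_A b hy]
  field_simp
  ring

/-- Explicit formula for the action along a trajectory avoiding the origin. -/
theorem action_formula (b ω : ℝ) (hω : 0 < ω)
    (y : ℝ × ℝ) (hy : y ≠ 0) (η : ℝ × ℝ) (t : ℝ) (ht : 0 ≤ t)
    (hne : ∀ s ∈ Set.Icc (0 : ℝ) t, traj b ω y η s ≠ 0) :
    action b ω y η t =
      ((Real.cos (2 * ω * t) - 1) / 2) * dot y η +
      (Real.sin (2 * ω * t) / (4 * ω)) *
        (normSq2 (η - A b y) - ω ^ 2 * normSq2 y) +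
      b * (wedge y η - b) *
        ∫ s in (0 : ℝ)..t, (normSq2 (traj b ω y η s))⁻¹ :=
  action_formula_general b ω hω y η t ht hne
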